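/- Every subgroup of PGL(2,ℤ) of order 4 contains an element that is conjugate in PGL(2,ℤ) to [T]. -/

import Mathlib

open Matrix

abbrev GL2Z := GL (Fin 2) ℤ

/-- PGL(2,ℤ): the quotient of GL(2,ℤ) by its center {I, -I}. -/
abbrev PGL2Z := GL2Z ⧸ Subgroup.center GL2Z

/-- The image of a matrix in PGL(2,ℤ). -/
def cls (M : GL2Z) : PGL2Z := QuotientGroup.mk M

def Smat : GL2Z := ⟨!![0,1;1,0], !![0,1;1,0], by decide, by decide⟩
def Nmat : GL2Z := ⟨!![-1,0;0,1], !![-1,0;0,1], by decide, by decide⟩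
def Tmat : GL2Z := ⟨!![0,-1;1,0], !![0,1;-1,0], by decide, by decide⟩
def Umat : GL2Z := ⟨!![0,-1;1,1], !![1,1;-1,0], by decide, by decide⟩

open scoped MatrixGroups

/-!
The determinant descends to a homomorphism `PGL(2,ℤ) → ℤˣ`, whose kernel meets a group of
order 4 in a subgroup of even order; so `H` contains an element `[M]` of order 2 with
`det M = 1`. By Cayley–Hamilton, `(tr M) • M = M² + (det M) • I` is scalar while `M` is not,
so `tr M = 0`. A traceless `M = [[a, b], [c, -a]]` in `SL(2,ℤ)` is conjugate, after reducing
`a` modulo `c`, either to `±T` or to a traceless matrix with smaller `|c|`; hence `M` is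
conjugate to `T` or `T⁻¹ = -T`, which have the same image in `PGL(2,ℤ)`.
-/

theorem MonoidHom.exists_orderOf_eq_prime_mem_ker {G A : Type*} [Group G] [Group A] [Finite G]
    (f : G →* A) {p : ℕ} [Fact p.Prime] (h : p * Nat.card A ∣ Nat.card G) :
    ∃ g ∈ f.ker, orderOf g = p := by
  have : Finite f.range := .of_surjective _ f.rangeRestrict_surjective
  have hG : Nat.card f.ker * Nat.card f.range = Nat.card G := by
    rw [← Subgroup.index_ker, Subgroup.card_mul_index]
  have hp : p ∣ Nat.card f.ker := by
    refine Nat.dvd_of_mul_dvd_mul_right (Nat.card_pos (α := f.range)) ?_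
    rw [hG]
    exact (Nat.mul_dvd_mul_left p (Subgroup.card_subgroup_dvd_card f.range)).trans h
  obtain ⟨g, hg⟩ := exists_prime_orderOf_dvd_card' p hp
  exact ⟨g, g.2, by rwa [Subgroup.orderOf_coe]⟩

theorem Matrix.mem_range_scalar_of_smul_mem_range_scalar {n R : Type*} [Fintype n] [DecidableEq n]
    [CommRing R] [NoZeroDivisors R] {A : Matrix n n R} {t : R} (ht : t ≠ 0)
    (h : t • A ∈ Set.range (scalar n)) : A ∈ Set.range (scalar n) := by
  obtain ⟨s, hs⟩ := h
  cases isEmpty_or_nonempty n with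
  | inl _ => exact ⟨0, Subsingleton.elim _ _⟩
  | inr hn =>
    obtain ⟨i⟩ := hn
    have hsi : s = t * A i i := by simpa using congr_fun₂ hs i i
    refine ⟨A i i, smul_right_injective _ ht ?_⟩
    show t • scalar n (A i i) = t • A
    rw [← hs, hsi]
    ext j k
    by_cases hjk : j = k <;> simp [hjk]

theorem Matrix.mul_self_eq_trace_smul_sub_det_smul {R : Type*} [CommRing R]
    (A : Matrix (Fin 2) (Fin 2) R) :
    A * A = A.trace • A - A.det • 1 := by
  ext i j
  fin_cases i <;> fin_cases j <;>
    simp [trace_fin_two, det_fin_two, mul_apply, Fin.sum_univ_two] <;> ring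

theorem Matrix.trace_eq_zero_of_mul_self_mem_range_scalar {R : Type*} [CommRing R]
    [NoZeroDivisors R] {A : Matrix (Fin 2) (Fin 2) R} (hA : A * A ∈ Set.range (scalar (Fin 2)))
    (hA' : A ∉ Set.range (scalar (Fin 2))) : A.trace = 0 := by
  by_contra ht
  obtain ⟨s, hs⟩ := hA
  refine hA' (mem_range_scalar_of_smul_mem_range_scalar ht ⟨s + A.det, ?_⟩)
  rw [map_add, hs, mul_self_eq_trace_smul_sub_det_smul, scalar_apply, ← smul_one_eq_diagonal,
    sub_add_cancel]

namespace ModularGroup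

theorem eq_S_or_eq_S_inv_of_trace_eq_zero {g : SL(2, ℤ)}
    (hg : trace (g : Matrix (Fin 2) (Fin 2) ℤ) = 0) (h00 : g 0 0 = 0) : g = S ∨ g = S⁻¹ := by
  have h11 : g 1 1 = 0 := by simpa [trace_fin_two, h00] using hg
  have hdet : g 0 1 * g 1 0 = -1 := by
    have := g.det_coe; rw [det_fin_two, h00, h11] at this; linarith
  rcases Int.eq_one_or_neg_one_of_mul_eq_neg_one' hdet with ⟨h01, h10⟩ | ⟨h01, h10⟩
  · right
    ext i j
    fin_cases i <;> fin_cases j <;> simp [adjugate_fin_two, coe_S, *]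
  · left
    ext i j
    fin_cases i <;> fin_cases j <;> simp [coe_S, *]

theorem exists_isConj_trace_eq_zero_step {g : SL(2, ℤ)}
    (hg : trace (g : Matrix (Fin 2) (Fin 2) ℤ) = 0) :
    ∃ g' : SL(2, ℤ), IsConj g g' ∧ trace (g' : Matrix (Fin 2) (Fin 2) ℤ) = 0 ∧
      (g' 0 0 = 0 ∨ (g' 1 0).natAbs < (g 1 0).natAbs) := by
  set a := g 0 0
  set b := g 0 1
  set c := g 1 0
  have hg_eq : (g : Matrix (Fin 2) (Fin 2) ℤ) = !![a, b; c, -a] := by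
    have h11 : g 1 1 = -a := by simp only [trace_fin_two] at hg; linarith
    rw [eta_fin_two (g : Matrix (Fin 2) (Fin 2) ℤ), h11]
  have hdet : a * a + b * c = -1 := by
    have := g.det_coe; rw [hg_eq, det_fin_two_of] at this; linarith
  have hc : c ≠ 0 := by rintro hc; rw [hc] at hdet; nlinarith
  set t := -(a / c)
  have ha' : a % c = a + t * c := by rw [Int.emod_def]; ring
  set a' := a % c
  set b' := b - t * (2 * a + t * c)
  let k : SL(2, ℤ) := ⟨!![0, -1; 1, t], by simp [det_fin_two_of]⟩
  let g' : SL(2, ℤ) :=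
    ⟨!![-a', -c; -b', a'], by rw [det_fin_two_of, ha']; linear_combination -hdet⟩
  have hconj : k * g = g' * k := by
    refine Subtype.coe_injective ?_
    change (k : Matrix (Fin 2) (Fin 2) ℤ) * g = (g' : Matrix (Fin 2) (Fin 2) ℤ) * k
    rw [hg_eq]
    simp only [k, g', b', mul_fin_two, ha']
    ext i j
    fin_cases i <;> fin_cases j <;> simp <;> ring
  refine ⟨g', isConj_iff.2 ⟨k, by rw [mul_inv_eq_iff_eq_mul, hconj]⟩,
    by simp [g', trace_fin_two], ?_⟩
  -- `0 ≤ a' < |c|`, so `|b' c| = 1 + a'² < c²` unless `a' = 0`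
  by_cases ha'0 : a' = 0
  · exact Or.inl (by simp [g', ha'0])
  right
  have hdet' : b' * c = -(1 + a' * a') := by rw [ha']; linear_combination hdet
  have ha'_pos : 0 < a' := lt_of_le_of_ne (Int.emod_nonneg a hc) (Ne.symm ha'0)
  have ha'_lt : a' < |c| := Int.emod_lt_abs a hc
  have hbc : |b'| * |c| = 1 + a' * a' := by
    rw [← abs_mul, hdet', abs_neg, abs_of_pos (by positivity)]
  show (-b').natAbs < c.natAbs
  zify
  rw [abs_neg]
  nlinarith

theorem isConj_S_or_isConj_S_inv_of_trace_eq_zero {g : SL(2, ℤ)}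
    (hg : trace (g : Matrix (Fin 2) (Fin 2) ℤ) = 0) : IsConj g S ∨ IsConj g S⁻¹ := by
  induction hn : (g 1 0).natAbs using Nat.strong_induction_on generalizing g with
  | _ n ih =>
  obtain ⟨g', hgg', hg', h00 | hlt⟩ := exists_isConj_trace_eq_zero_step hg
  · rcases eq_S_or_eq_S_inv_of_trace_eq_zero hg' h00 with rfl | rfl
    · exact .inl hgg'
    · exact .inr hgg'
  · exact (ih _ (hn ▸ hlt) hg' rfl).imp hgg'.trans hgg'.trans

end ModularGroup

theorem Matrix.GeneralLinearGroup.trace_eq_zero_of_sq_mem_center {R : Type*} [CommRing R]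
    [NoZeroDivisors R] {M : GL (Fin 2) R} (h2 : M ^ 2 ∈ Subgroup.center (GL (Fin 2) R))
    (h1 : M ∉ Subgroup.center (GL (Fin 2) R)) : trace (M : Matrix (Fin 2) (Fin 2) R) = 0 :=
  trace_eq_zero_of_mul_self_mem_range_scalar
    (by simpa [sq] using mem_center_iff_val_mem_range_scalar.1 h2)
    (mt mem_center_iff_val_mem_range_scalar.2 h1)

noncomputable def PGL2Z.det : PGL2Z →* ℤˣ :=
  QuotientGroup.lift _ GeneralLinearGroup.det <| by
    rw [GeneralLinearGroup.center_eq_range_scalar, MonoidHom.range_le_ker_iff]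
    ext u
    simp [Int.units_sq]

theorem PGL2Z.det_cls (M : GL2Z) : PGL2Z.det (cls M) = M.det := rfl

theorem cls_neg (M : GL2Z) : cls (-M) = cls M := by
  have h : (-1 : GL2Z) ∈ Subgroup.center GL2Z := Subgroup.mem_center_iff.2 fun g => by simp
  rw [cls, cls, ← mul_neg_one, QuotientGroup.mk_mul, (QuotientGroup.eq_one_iff _).2 h, mul_one]

open ModularGroup in
theorem isConj_cls_Tmat_of_det_eq_one_of_orderOf_eq_two {M : GL2Z} (hdet : M.det = 1)
    (hM : orderOf (cls M) = 2) :
    IsConj (cls M) (cls Tmat) := by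
  obtain ⟨hM2, hM1⟩ := orderOf_eq_prime_iff.1 hM
  have htr : trace (M : Matrix (Fin 2) (Fin 2) ℤ) = 0 :=
    GeneralLinearGroup.trace_eq_zero_of_sq_mem_center ((QuotientGroup.eq_one_iff _).1 hM2)
      (mt (QuotientGroup.eq_one_iff _).2 hM1)
  let g : SL(2, ℤ) := ⟨M, by simpa [Units.ext_iff] using hdet⟩
  let φ : SL(2, ℤ) →* PGL2Z := (QuotientGroup.mk' _).comp SpecialLinearGroup.toGL
  have hφg : φ g = cls M := congrArg cls (Units.ext rfl)
  have hφS : φ S = cls Tmat := by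
    refine congrArg cls (Units.ext ?_)
    simp [Tmat, coe_S]
  have hφS_inv : φ S⁻¹ = cls Tmat := by
    have hT : Tmat * Tmat = -1 := by decide
    rw [map_inv, hφS, inv_eq_iff_mul_eq_one, cls, ← QuotientGroup.mk_mul, hT, ← cls, cls_neg]
    rfl
  rcases isConj_S_or_isConj_S_inv_of_trace_eq_zero (g := g) htr with h | h
  · simpa [hφg, hφS] using φ.map_isConj h
  · simpa [hφg, hφS_inv] using φ.map_isConj h

/-- Every subgroup of PGL(2,ℤ) of order 4 contains an element conjugate to [T]. -/
theorem stmt_18 (H : Subgroup PGL2Z) (hH : Nat.card H = 4) :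
    ∃ h ∈ H, IsConj h (cls Tmat) := by
  have : Finite H := Nat.finite_of_card_ne_zero (by omega)
  obtain ⟨g, hg_ker, hg⟩ := (PGL2Z.det.comp H.subtype).exists_orderOf_eq_prime_mem_ker (p := 2)
    (by rw [hH, Nat.card_eq_fintype_card, Fintype.card_units_int])
  obtain ⟨M, hM⟩ : ∃ M, cls M = g := QuotientGroup.mk_surjective _
  refine ⟨g, g.2, hM ▸ isConj_cls_Tmat_of_det_eq_one_of_orderOf_eq_two ?_ ?_⟩
  · rw [← PGL2Z.det_cls, hM]
    simpa using hg_ker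
  · rw [hM, Subgroup.orderOf_coe, hg]
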